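/- The TCCR operator T satisfies the braid relation T₁T₂T₁ = T₂T₁T₂ on (ℂ^d)^{⊗3}. -/

import Mathlib

/-!
Both sides are continuous linear maps, so it suffices to compare them on the basis vectors
`e_i ⊗ e_j ⊗ e_k`. There `T₁` and `T₂` act through `T` on two adjacent factors, and `T (e_a ⊗ e_b)`
is determined by the relative order of `a` and `b`. Hence, once the relative order of `i`, `j`, `k`
is fixed (thirteen configurations), both sides are explicit combinations of the vectors
`e_σ(i) ⊗ e_σ(j) ⊗ e_σ(k)`, and their coefficients agree as polynomials in `μ`.
-/

/-- `ampl1 d T` is the amplification `T ⊗ 1` of an operator `T` on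
`ℂ^d ⊗ ℂ^d` (modelled as `EuclideanSpace ℂ (Fin d × Fin d)`) to the triple
tensor power, acting on the first two tensor factors. -/
noncomputable def ampl1 (d : ℕ)
    (T : EuclideanSpace ℂ (Fin d × Fin d) →L[ℂ] EuclideanSpace ℂ (Fin d × Fin d)) :
    EuclideanSpace ℂ (Fin d × Fin d × Fin d) →L[ℂ] EuclideanSpace ℂ (Fin d × Fin d × Fin d) :=
  LinearMap.toContinuousLinearMap
    { toFun := fun x => WithLp.toLp 2 (fun p =>
        T (WithLp.toLp 2 (fun r => x (r.1, r.2, p.2.2) : Fin d × Fin d → ℂ)) (p.1, p.2.1)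
        : Fin d × Fin d × Fin d → ℂ)
      map_add' := by
        intro x y; ext p
        have : (WithLp.toLp 2 (fun r => (x + y) (r.1, r.2, p.2.2) : Fin d × Fin d → ℂ) :
            EuclideanSpace ℂ (Fin d × Fin d)) =
            (WithLp.toLp 2 (fun r => x (r.1, r.2, p.2.2) : Fin d × Fin d → ℂ) :
            EuclideanSpace ℂ (Fin d × Fin d)) +
            (WithLp.toLp 2 (fun r => y (r.1, r.2, p.2.2) : Fin d × Fin d → ℂ) :
            EuclideanSpace ℂ (Fin d × Fin d)) := rfl
        show T _ _ = _
        rw [this, map_add]; rfl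
      map_smul' := by
        intro c x; ext p
        have : (WithLp.toLp 2 (fun r => (c • x) (r.1, r.2, p.2.2) : Fin d × Fin d → ℂ) :
            EuclideanSpace ℂ (Fin d × Fin d)) =
            c • (WithLp.toLp 2 (fun r => x (r.1, r.2, p.2.2) : Fin d × Fin d → ℂ) :
            EuclideanSpace ℂ (Fin d × Fin d)) := rfl
        show T _ _ = _
        rw [this, map_smul]; rfl }

/-- `ampl2 d T` is the amplification `1 ⊗ T`, acting on the last two tensor
factors of the triple tensor power. -/
noncomputable def ampl2 (d : ℕ)
    (T : EuclideanSpace ℂ (Fin d × Fin d) →L[ℂ] EuclideanSpace ℂ (Fin d × Fin d)) :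
    EuclideanSpace ℂ (Fin d × Fin d × Fin d) →L[ℂ] EuclideanSpace ℂ (Fin d × Fin d × Fin d) :=
  LinearMap.toContinuousLinearMap
    { toFun := fun x => WithLp.toLp 2 (fun p =>
        T (WithLp.toLp 2 (fun r => x (p.1, r.1, r.2) : Fin d × Fin d → ℂ)) (p.2.1, p.2.2)
        : Fin d × Fin d × Fin d → ℂ)
      map_add' := by
        intro x y; ext p
        have : (WithLp.toLp 2 (fun r => (x + y) (p.1, r.1, r.2) : Fin d × Fin d → ℂ) :
            EuclideanSpace ℂ (Fin d × Fin d)) =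
            (WithLp.toLp 2 (fun r => x (p.1, r.1, r.2) : Fin d × Fin d → ℂ) :
            EuclideanSpace ℂ (Fin d × Fin d)) +
            (WithLp.toLp 2 (fun r => y (p.1, r.1, r.2) : Fin d × Fin d → ℂ) :
            EuclideanSpace ℂ (Fin d × Fin d)) := rfl
        show T _ _ = _
        rw [this, map_add]; rfl
      map_smul' := by
        intro c x; ext p
        have : (WithLp.toLp 2 (fun r => (c • x) (p.1, r.1, r.2) : Fin d × Fin d → ℂ) :
            EuclideanSpace ℂ (Fin d × Fin d)) =
            c • (WithLp.toLp 2 (fun r => x (p.1, r.1, r.2) : Fin d × Fin d → ℂ) :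
            EuclideanSpace ℂ (Fin d × Fin d)) := rfl
        show T _ _ = _
        rw [this, map_smul]; rfl }

open EuclideanSpace

section Amplification

variable {d : ℕ}

noncomputable def tensorSingleRight (k : Fin d) :
    EuclideanSpace ℂ (Fin d × Fin d) →ₗ[ℂ] EuclideanSpace ℂ (Fin d × Fin d × Fin d) where
  toFun v := WithLp.toLp 2 fun p => v (p.1, p.2.1) * if p.2.2 = k then 1 else 0
  map_add' _ _ := by ext; exact add_mul _ _ _
  map_smul' _ _ := by ext; exact mul_assoc _ _ _

noncomputable def tensorSingleLeft (i : Fin d) :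
    EuclideanSpace ℂ (Fin d × Fin d) →ₗ[ℂ] EuclideanSpace ℂ (Fin d × Fin d × Fin d) where
  toFun v := WithLp.toLp 2 fun p => (if p.1 = i then 1 else 0) * v (p.2.1, p.2.2)
  map_add' _ _ := by ext; exact mul_add _ _ _
  map_smul' _ _ := by ext; exact mul_left_comm _ _ _

@[simp]
lemma tensorSingleRight_single (i j k : Fin d) :
    tensorSingleRight k (single (i, j) (1 : ℂ)) = single (i, j, k) 1 := by
  ext ⟨a, b, c⟩
  simp only [tensorSingleRight, LinearMap.coe_mk, AddHom.coe_mk, PiLp.single_apply, Prod.mk.injEq]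
  split_ifs <;> simp_all

@[simp]
lemma tensorSingleLeft_single (i j k : Fin d) :
    tensorSingleLeft i (single (j, k) (1 : ℂ)) = single (i, j, k) 1 := by
  ext ⟨a, b, c⟩
  simp only [tensorSingleLeft, LinearMap.coe_mk, AddHom.coe_mk, PiLp.single_apply, Prod.mk.injEq]
  split_ifs <;> simp_all

variable (T : EuclideanSpace ℂ (Fin d × Fin d) →L[ℂ] EuclideanSpace ℂ (Fin d × Fin d))

@[simp]
lemma ampl1_single (i j k : Fin d) :
    ampl1 d T (single (i, j, k) 1) = tensorSingleRight k (T (single (i, j) 1)) := by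
  ext ⟨a, b, c⟩
  have slice : (WithLp.toLp 2 fun r : Fin d × Fin d => single (i, j, k) (1 : ℂ) (r.1, r.2, c) :
      EuclideanSpace ℂ (Fin d × Fin d)) = (if c = k then 1 else 0 : ℂ) • single (i, j) 1 := by
    ext ⟨x, y⟩
    simp only [PiLp.single_apply, Prod.mk.injEq, PiLp.smul_apply, smul_eq_mul]
    split_ifs <;> simp_all
  change T _ (a, b) = T _ (a, b) * _
  rw [slice, map_smul, PiLp.smul_apply, smul_eq_mul, mul_comm]

@[simp]
lemma ampl2_single (i j k : Fin d) :
    ampl2 d T (single (i, j, k) 1) = tensorSingleLeft i (T (single (j, k) 1)) := by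
  ext ⟨a, b, c⟩
  have slice : (WithLp.toLp 2 fun r : Fin d × Fin d => single (i, j, k) (1 : ℂ) (a, r.1, r.2) :
      EuclideanSpace ℂ (Fin d × Fin d)) = (if a = i then 1 else 0 : ℂ) • single (j, k) 1 := by
    ext ⟨x, y⟩
    simp only [PiLp.single_apply, Prod.mk.injEq, PiLp.smul_apply, smul_eq_mul]
    split_ifs <;> simp_all
  change T _ (b, c) = _ * T _ (b, c)
  rw [slice, map_smul, PiLp.smul_apply, smul_eq_mul]

end Amplification

section Braid

variable {d : ℕ} {q : ℂ}
  {T : EuclideanSpace ℂ (Fin d × Fin d) →L[ℂ] EuclideanSpace ℂ (Fin d × Fin d)}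

theorem ampl_braid_apply_single
    (hTd : ∀ i : Fin d, T (single (i, i) 1) = q ^ 2 • single (i, i) 1)
    (hTlt : ∀ i j : Fin d, i < j → T (single (i, j) 1) = q • single (j, i) 1)
    (hTgt : ∀ i j : Fin d, j < i →
      T (single (i, j) 1) = -(1 - q ^ 2) • single (i, j) 1 + q • single (j, i) 1)
    (i j k : Fin d) :
    ampl1 d T (ampl2 d T (ampl1 d T (single (i, j, k) 1))) =
      ampl2 d T (ampl1 d T (ampl2 d T (single (i, j, k) 1))) := by
  -- The order hypotheses in context discharge the side conditions of `hTlt` and `hTgt`.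
  obtain hij | hij | hij := lt_trichotomy i j <;>
  obtain hjk | hjk | hjk := lt_trichotomy j k <;>
  obtain hik | hik | hik := lt_trichotomy i k <;>
  subst_vars <;>
  first
  | (exfalso; order)
  | (simp only [ampl1_single, ampl2_single, map_add, map_smul, tensorSingleLeft_single,
      tensorSingleRight_single, *] <;> module)

end Braid

theorem tccr_T_braid_general (d : ℕ) (μ : ℝ)
    (T : EuclideanSpace ℂ (Fin d × Fin d) →L[ℂ] EuclideanSpace ℂ (Fin d × Fin d))
    (hTd : ∀ i : Fin d,
      T (EuclideanSpace.single (i, i) (1 : ℂ)) =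
        ((μ : ℂ) ^ 2) • EuclideanSpace.single (i, i) (1 : ℂ))
    (hTlt : ∀ i j : Fin d, i < j →
      T (EuclideanSpace.single (i, j) (1 : ℂ)) =
        (μ : ℂ) • EuclideanSpace.single (j, i) (1 : ℂ))
    (hTgt : ∀ i j : Fin d, j < i →
      T (EuclideanSpace.single (i, j) (1 : ℂ)) =
        (-(1 - (μ : ℂ) ^ 2)) • EuclideanSpace.single (i, j) (1 : ℂ) +
          (μ : ℂ) • EuclideanSpace.single (j, i) (1 : ℂ)) :
    ampl1 d T ∘L ampl2 d T ∘L ampl1 d T = ampl2 d T ∘L ampl1 d T ∘L ampl2 d T := by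
  refine ContinuousLinearMap.coe_injective <| (basisFun _ ℂ).toBasis.ext fun ⟨i, j, k⟩ => ?_
  simpa using ampl_braid_apply_single hTd hTlt hTgt i j k

/-- The TCCR operator `T` satisfies the braid relation
`T₁ T₂ T₁ = T₂ T₁ T₂` on the triple tensor power `(ℂ^d)^{⊗3}`, where
`T₁ = T ⊗ 1` and `T₂ = 1 ⊗ T`. -/
theorem tccr_T_braid (d : ℕ) (hd : 1 ≤ d) (μ : ℝ) (hμ0 : 0 < μ) (hμ1 : μ < 1)
    (T : EuclideanSpace ℂ (Fin d × Fin d) →L[ℂ] EuclideanSpace ℂ (Fin d × Fin d))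
    (hTd : ∀ i : Fin d,
      T (EuclideanSpace.single (i, i) (1 : ℂ)) =
        ((μ : ℂ) ^ 2) • EuclideanSpace.single (i, i) (1 : ℂ))
    (hTlt : ∀ i j : Fin d, i < j →
      T (EuclideanSpace.single (i, j) (1 : ℂ)) =
        (μ : ℂ) • EuclideanSpace.single (j, i) (1 : ℂ))
    (hTgt : ∀ i j : Fin d, j < i →
      T (EuclideanSpace.single (i, j) (1 : ℂ)) =
        (-(1 - (μ : ℂ) ^ 2)) • EuclideanSpace.single (i, j) (1 : ℂ) +
          (μ : ℂ) • EuclideanSpace.single (j, i) (1 : ℂ)) :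
    ampl1 d T ∘L ampl2 d T ∘L ampl1 d T = ampl2 d T ∘L ampl1 d T ∘L ampl2 d T :=
  tccr_T_braid_general d μ T hTd hTlt hTgt
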